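/- arXiv:1901.06755 — 3 statements merged into one kernel-verified Lean document; each statement's English description precedes it below -/
import Mathlib

section
/- Let Z, Y be independent nonnegative random variables with Z having continuous CDF F_Z, and let ε, a > 0. Then lim_{ρ→∞} P(ρ a Z < ε(ρ Y + 1)) = P(a Z ≤ ε Y). In particular, if P(a Z ≤ ε Y) > 0, the outage probability does not tend to zero as ρ → ∞ (an error floor). -/
open MeasureTheory ProbabilityTheory Filter

/-- Error-floor phenomenon with imperfect SIC: as `ρ → ∞`,
`P(ρ a Z < ε (ρ Y + 1)) → P(a Z ≤ ε Y)`; in particular, if this limit is positive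
the outage probability does not tend to zero. -/
theorem stmt_10 {Ω : Type*} [MeasureSpace Ω] [IsProbabilityMeasure (ℙ : Measure Ω)]
    (Z Y : Ω → ℝ) (hZpos : ∀ ω, 0 ≤ Z ω) (hYpos : ∀ ω, 0 ≤ Y ω)
    (hZm : Measurable Z) (hYm : Measurable Y)
    (hindep : IndepFun Z Y ℙ)
    (FZ : ℝ → ℝ) (hFZ : ∀ z, FZ z = (ℙ {ω | Z ω ≤ z}).toReal) (hFZc : Continuous FZ)
    (ε a : ℝ) (hε : 0 < ε) (ha : 0 < a) :
    Filter.Tendsto (fun ρ : ℝ => (ℙ {ω | ρ * a * Z ω < ε * (ρ * Y ω + 1)}).toReal)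
        atTop (nhds ((ℙ {ω | a * Z ω ≤ ε * Y ω}).toReal))
      ∧ (0 < (ℙ {ω | a * Z ω ≤ ε * Y ω}).toReal →
          ¬ Filter.Tendsto (fun ρ : ℝ => (ℙ {ω | ρ * a * Z ω < ε * (ρ * Y ω + 1)}).toReal)
              atTop (nhds 0)) := by
  set s : ℝ → Set Ω := fun t => {ω | a * Z ω < ε * Y ω + t} with hs
  have hmeas : ∀ t, MeasurableSet (s t) := fun t =>
    measurableSet_lt (hZm.const_mul a) ((hYm.const_mul ε).add measurable_const)
  -- the intersection over t > 0
  have hInter : (⋂ t > (0:ℝ), s t) = {ω | a * Z ω ≤ ε * Y ω} := by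
    ext ω
    simp only [Set.mem_iInter, Set.mem_setOf_eq, hs]
    constructor
    · intro h
      by_contra hc
      push_neg at hc
      have := h ((a * Z ω - ε * Y ω) / 2) (by linarith)
      linarith
    · intro h t ht; linarith
  -- measure continuity from above
  have h1 : Tendsto (fun t => ℙ (s t)) (nhdsWithin 0 (Set.Ioi 0))
      (nhds (ℙ {ω | a * Z ω ≤ ε * Y ω})) := by
    rw [← hInter]
    exact tendsto_measure_biInter_gt (fun r _ => (hmeas r).nullMeasurableSet)
      (fun i j _ hij => fun ω hω => by simp only [hs, Set.mem_setOf_eq] at *; linarith)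
      ⟨1, one_pos, measure_ne_top _ _⟩
  -- ε / ρ → 0⁺
  have h2 : Tendsto (fun ρ : ℝ => ε / ρ) atTop (nhdsWithin 0 (Set.Ioi 0)) := by
    apply tendsto_nhdsWithin_of_tendsto_nhds_of_eventually_within
    · exact tendsto_const_nhds.div_atTop tendsto_id
    · filter_upwards [eventually_gt_atTop (0:ℝ)] with ρ hρ
      exact div_pos hε hρ
  have h3 : Tendsto (fun ρ : ℝ => ℙ (s (ε / ρ))) atTop
      (nhds (ℙ {ω | a * Z ω ≤ ε * Y ω})) := h1.comp h2
  -- eventually the sets coincide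
  have h4 : Tendsto (fun ρ : ℝ => ℙ {ω | ρ * a * Z ω < ε * (ρ * Y ω + 1)}) atTop
      (nhds (ℙ {ω | a * Z ω ≤ ε * Y ω})) := by
    refine h3.congr' ?_
    filter_upwards [eventually_gt_atTop (0:ℝ)] with ρ hρ
    congr 1
    ext ω
    simp only [hs, Set.mem_setOf_eq]
    have hne : ρ ≠ 0 := hρ.ne'
    rw [show ε * (ρ * Y ω + 1) = ρ * (ε * Y ω + ε / ρ) by field_simp,
      mul_assoc, mul_lt_mul_iff_right₀ hρ]
  have hfin : ℙ {ω | a * Z ω ≤ ε * Y ω} ≠ ⊤ := measure_ne_top _ _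
  have main := (ENNReal.tendsto_toReal hfin).comp h4
  refine ⟨main, fun hpos hcontra => ?_⟩
  have := tendsto_nhds_unique main hcontra
  linarith
end

section
/- Let F be a CDF on [0,∞) with F(z)/z^K → c as z → 0⁺ for some constants c > 0 and integer K ≥ 1, and let X_{(m)} be the m-th smallest of M i.i.d. samples from F (1 ≤ m ≤ M). Then P(X_{(m)} ≤ z)/z^{mK} → C(M,m) · c^m as z → 0⁺. -/
open MeasureTheory ProbabilityTheory Filter

lemma aux_count (M m : ℕ) {Ω : Type*} [MeasureSpace Ω] [IsProbabilityMeasure (ℙ : Measure Ω)]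
    (X : Fin M → Ω → ℝ) (μ : Measure ℝ) [IsProbabilityMeasure μ]
    (hindep : iIndepFun X ℙ)
    (hlaw : ∀ i, Measure.map (X i) ℙ = μ) (z : ℝ) :
    ℙ {ω | m ≤ (Finset.univ.filter (fun i => X i ω ≤ z)).card}
      = ∑ T ∈ Finset.univ.powerset.filter (fun T : Finset (Fin M) => m ≤ T.card),
          (μ (Set.Iic z)) ^ T.card * (1 - μ (Set.Iic z)) ^ (M - T.card) := by
  have hXae : ∀ i, AEMeasurable (X i) ℙ := fun i =>
    aemeasurable_of_map_neZero (by rw [hlaw i]; infer_instance)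
  set sets : Finset (Fin M) → Fin M → Set ℝ := fun T i =>
    if i ∈ T then Set.Iic z else Set.Ioi z with hsets
  set E : Finset (Fin M) → Set Ω := fun T => ⋂ i ∈ Finset.univ, X i ⁻¹' (sets T i) with hE
  have hEmem : ∀ T (ω : Ω), ω ∈ E T ↔ Finset.univ.filter (fun i => X i ω ≤ z) = T := by
    intro T ω
    simp only [hE, Set.mem_iInter, Set.mem_preimage, hsets]
    constructor
    · intro h
      ext i
      have := h i (Finset.mem_univ i)
      simp only [Finset.mem_filter, Finset.mem_univ, true_and]
      by_cases hi : i ∈ T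
      · simp [hi] at this ⊢; exact this
      · simp [hi] at this ⊢; exact this
    · intro h i _
      by_cases hi : i ∈ T <;> simp [hi]
      · have : i ∈ Finset.univ.filter (fun i => X i ω ≤ z) := h ▸ hi
        simpa using this
      · have : i ∉ Finset.univ.filter (fun i => X i ω ≤ z) := h ▸ hi
        simpa using this
  have hnm : ∀ T, NullMeasurableSet (E T) ℙ := by
    intro T
    refine Finset.nullMeasurableSet_biInter _ fun i _ => ?_
    exact (hXae i).nullMeasurable (by by_cases hi : i ∈ T <;> simp [hsets, hi, measurableSet_Iic, measurableSet_Ioi])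
  have hunion : {ω | m ≤ (Finset.univ.filter (fun i => X i ω ≤ z)).card}
      = ⋃ T ∈ Finset.univ.powerset.filter (fun T : Finset (Fin M) => m ≤ T.card), E T := by
    ext ω
    simp only [Set.mem_setOf_eq, Set.mem_iUnion, Finset.mem_filter, Finset.mem_powerset]
    constructor
    · intro h
      exact ⟨Finset.univ.filter (fun i => X i ω ≤ z), ⟨Finset.filter_subset _ _, h⟩,
        (hEmem _ ω).mpr rfl⟩
    · rintro ⟨T, ⟨-, hT⟩, hω⟩
      exact ((hEmem T ω).mp hω).symm ▸ hT
  have hdisj : ∀ T ∈ Finset.univ.powerset.filter (fun T : Finset (Fin M) => m ≤ T.card),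
      ∀ T' ∈ Finset.univ.powerset.filter (fun T : Finset (Fin M) => m ≤ T.card),
      T ≠ T' → AEDisjoint ℙ (E T) (E T') := by
    intro T _ T' _ hne
    refine Disjoint.aedisjoint (Set.disjoint_left.mpr fun ω hω hω' => ?_)
    exact hne (((hEmem T ω).mp hω).symm.trans ((hEmem T' ω).mp hω'))
  have hmeas : ∀ T, ℙ (E T) = (μ (Set.Iic z)) ^ T.card * (1 - μ (Set.Iic z)) ^ (M - T.card) := by
    intro T
    have := hindep.measure_inter_preimage_eq_mul (S := Finset.univ) (sets := sets T)
      (fun i _ => by by_cases hi : i ∈ T <;> simp [hsets, hi, measurableSet_Iic, measurableSet_Ioi])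
    rw [hE, this]
    have hIic : ∀ i, ℙ (X i ⁻¹' Set.Iic z) = μ (Set.Iic z) := fun i => by
      rw [← hlaw i, Measure.map_apply_of_aemeasurable (hXae i) measurableSet_Iic]
    have hIoi : ∀ i, ℙ (X i ⁻¹' Set.Ioi z) = 1 - μ (Set.Iic z) := by
      intro i
      have hcompl : X i ⁻¹' Set.Ioi z = (X i ⁻¹' Set.Iic z)ᶜ := by
        ext ω; simp [not_le]
      rw [hcompl, measure_compl₀ ((hXae i).nullMeasurable measurableSet_Iic) (measure_ne_top _ _),
        measure_univ, hIic]
    rw [← Finset.prod_mul_prod_compl T]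
    congr 1
    · rw [show (∏ i ∈ T, ℙ (X i ⁻¹' sets T i)) = ∏ _i ∈ T, μ (Set.Iic z) from
        Finset.prod_congr rfl fun i hi => by simp [hsets, hi, hIic i], Finset.prod_const]
    · rw [show (∏ i ∈ Tᶜ, ℙ (X i ⁻¹' sets T i)) = ∏ _i ∈ Tᶜ, (1 - μ (Set.Iic z)) from
        Finset.prod_congr rfl fun i hi => by simp [hsets, Finset.mem_compl.mp hi, hIoi i],
        Finset.prod_const, Finset.card_compl, Fintype.card_fin]
  rw [hunion, measure_biUnion_finset₀ hdisj (fun T _ => hnm T)]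
  exact Finset.sum_congr rfl fun T _ => hmeas T

/-- If the common CDF behaves like `c z^K` near `0⁺`, then the CDF of the `m`-th
smallest of `M` i.i.d. samples behaves like `C(M,m) c^m z^{mK}` near `0⁺`.
The event `{X_{(m)} ≤ z}` is expressed as `{at least m of the X_i are ≤ z}`. -/
theorem stmt_14 (M m K : ℕ) (hm : 1 ≤ m) (hmM : m ≤ M) (hK : 1 ≤ K)
    {Ω : Type*} [MeasureSpace Ω] [IsProbabilityMeasure (ℙ : Measure Ω)]
    (X : Fin M → Ω → ℝ) (μ : Measure ℝ) [IsProbabilityMeasure μ]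
    (hindep : iIndepFun X ℙ)
    (hlaw : ∀ i, Measure.map (X i) ℙ = μ)
    (hsupp : μ (Set.Iio 0) = 0)
    (F : ℝ → ℝ) (hF : ∀ z, F z = (μ (Set.Iic z)).toReal)
    (c : ℝ) (hc : 0 < c)
    (hasymp : Filter.Tendsto (fun z => F z / z ^ K) (nhdsWithin 0 (Set.Ioi 0)) (nhds c)) :
    Filter.Tendsto
      (fun z => (ℙ {ω | m ≤ (Finset.univ.filter (fun i => X i ω ≤ z)).card}).toReal
                  / z ^ (m * K))
      (nhdsWithin 0 (Set.Ioi 0)) (nhds ((M.choose m : ℝ) * c ^ m)) := by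
  set S : Finset (Finset (Fin M)) :=
    Finset.univ.powerset.filter (fun T : Finset (Fin M) => m ≤ T.card) with hS
  -- F tends to 0
  have hzK : Tendsto (fun z : ℝ => z ^ K) (nhdsWithin 0 (Set.Ioi 0)) (nhds 0) := by
    have h := ((continuous_pow K).tendsto (0 : ℝ)).mono_left
      (nhdsWithin_le_nhds (s := Set.Ioi 0))
    simpa [zero_pow (by omega : K ≠ 0)] using h
  have hF0 : Tendsto F (nhdsWithin 0 (Set.Ioi 0)) (nhds 0) := by
    have h := hasymp.mul hzK
    rw [mul_zero] at h
    refine h.congr' ?_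
    filter_upwards [self_mem_nhdsWithin] with z hz
    exact div_mul_cancel₀ _ (pow_ne_zero _ (ne_of_gt hz))
  -- limit of the sum of terms
  have key : Tendsto
      (fun z => ∑ T ∈ S, (F z / z ^ K) ^ m * (F z) ^ (T.card - m) * (1 - F z) ^ (M - T.card))
      (nhdsWithin 0 (Set.Ioi 0))
      (nhds (∑ T ∈ S, c ^ m * (0 : ℝ) ^ (T.card - m) * (1 - 0 : ℝ) ^ (M - T.card))) := by
    refine tendsto_finset_sum _ fun T _ => ?_
    exact ((hasymp.pow m).mul (hF0.pow _)).mul ((tendsto_const_nhds.sub hF0).pow _)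
  -- the limit value is the claimed one
  have hval : (∑ T ∈ S, c ^ m * (0 : ℝ) ^ (T.card - m) * (1 - 0 : ℝ) ^ (M - T.card))
      = (M.choose m : ℝ) * c ^ m := by
    have h1 : ∀ T ∈ S, c ^ m * (0 : ℝ) ^ (T.card - m) * (1 - 0 : ℝ) ^ (M - T.card)
        = if T.card = m then c ^ m else 0 := by
      intro T hT
      have hTm : m ≤ T.card := (Finset.mem_filter.mp hT).2
      rcases eq_or_ne T.card m with h | h
      · simp [h]
      · have : T.card - m ≠ 0 := by omega
        simp [h, zero_pow this]
    rw [Finset.sum_congr rfl h1, ← Finset.sum_filter, Finset.sum_const]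
    have h2 : S.filter (fun T => T.card = m) = Finset.powersetCard m Finset.univ := by
      rw [hS, Finset.filter_filter, Finset.powersetCard_eq_filter]
      apply Finset.filter_congr
      intro T _
      constructor
      · rintro ⟨-, h⟩; exact h
      · intro h; exact ⟨h.ge, h⟩
    rw [h2, Finset.card_powersetCard, Finset.card_univ, Fintype.card_fin, nsmul_eq_mul]
  rw [← hval]
  refine key.congr' ?_
  filter_upwards [self_mem_nhdsWithin] with z hz
  have hz0 : (0 : ℝ) < z := hz
  have hcount := aux_count M m X μ hindep hlaw z
  have htoReal : (ℙ {ω | m ≤ (Finset.univ.filter (fun i => X i ω ≤ z)).card}).toReal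
      = ∑ T ∈ S, (F z) ^ T.card * (1 - F z) ^ (M - T.card) := by
    rw [hcount, ENNReal.toReal_sum (fun T _ =>
      ENNReal.mul_ne_top (ENNReal.pow_ne_top (measure_ne_top μ _))
        (ENNReal.pow_ne_top (ne_top_of_le_ne_top ENNReal.one_ne_top tsub_le_self)))]
    refine Finset.sum_congr rfl fun T _ => ?_
    rw [ENNReal.toReal_mul, ENNReal.toReal_pow, ENNReal.toReal_pow,
      ENNReal.toReal_sub_of_le prob_le_one ENNReal.one_ne_top, ENNReal.toReal_one, hF]
  rw [htoReal, Finset.sum_div]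
  refine (Finset.sum_congr rfl fun T hT => ?_).symm
  have hTm : m ≤ T.card := (Finset.mem_filter.mp hT).2
  have hzK0 : z ^ K ≠ 0 := pow_ne_zero _ (ne_of_gt hz0)
  rw [pow_mul', div_pow, div_mul_eq_mul_div, div_mul_eq_mul_div]
  congr 2
  rw [← pow_add]
  congr 1
  omega
end

section
/- Fix K ≥ 1, η > 0, α > 0, R > 0 and let F̃(z) = (2/R²) ∫_0^R [1 − e^{−z(1+r^α)/η} Σ_{i=0}^{K−1} (z(1+r^α)/η)^i/i!] r dr. Then F̃(z)/z^K → (2/(R² K! η^K)) ∫_0^R (1+r^α)^K r dr as z → 0⁺. -/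
open MeasureTheory Real Filter

private lemma phi_est (K : ℕ) {x : ℝ} (hx0 : 0 ≤ x) (hx1 : x ≤ 1) :
    |(1 - Real.exp (-x) * ∑ i ∈ Finset.range K, x ^ i / (Nat.factorial i : ℝ))
        - x ^ K / (Nat.factorial K : ℝ)|
      ≤ (((K:ℝ) + 2) / ((Nat.factorial (K+1) : ℝ) * ((K:ℝ)+1)) + 1 / (Nat.factorial K : ℝ))
          * x ^ (K+1) := by
  have hxabs : |x| ≤ 1 := by rwa [abs_of_nonneg hx0]
  have hRb := Real.exp_bound hxabs (Nat.succ_pos K)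
  have hNE : Real.exp (-x) * Real.exp x = 1 := by
    rw [← Real.exp_add]; simp
  have key : (1 - Real.exp (-x) * ∑ i ∈ Finset.range K, x ^ i / (Nat.factorial i : ℝ))
      - x ^ K / (Nat.factorial K : ℝ)
      = Real.exp (-x) * (Real.exp x - ∑ i ∈ Finset.range (K+1), x ^ i / (Nat.factorial i : ℝ))
        + (Real.exp (-x) - 1) * (x ^ K / (Nat.factorial K : ℝ)) := by
    rw [Finset.sum_range_succ]
    linear_combination -hNE
  rw [key]
  have hN1 : Real.exp (-x) ≤ 1 := by
    rw [Real.exp_le_one_iff]; linarith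
  have hN0 : 0 < Real.exp (-x) := Real.exp_pos _
  have hN2 : |Real.exp (-x) - 1| ≤ x := by
    rw [abs_sub_comm, abs_of_nonneg (by linarith)]
    have := Real.add_one_le_exp (-x)
    linarith
  have habs1 : |Real.exp (-x) * (Real.exp x - ∑ i ∈ Finset.range (K+1), x ^ i / (Nat.factorial i : ℝ))|
      ≤ x ^ (K+1) * (((K:ℝ)+2) / ((Nat.factorial (K+1) : ℝ) * ((K:ℝ)+1))) := by
    rw [abs_mul, abs_of_pos hN0]
    calc Real.exp (-x) * |Real.exp x - ∑ i ∈ Finset.range (K+1), x ^ i / (Nat.factorial i : ℝ)|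
        ≤ 1 * |Real.exp x - ∑ i ∈ Finset.range (K+1), x ^ i / (Nat.factorial i : ℝ)| := by
          gcongr
      _ ≤ x ^ (K+1) * (((K:ℝ)+2) / ((Nat.factorial (K+1) : ℝ) * ((K:ℝ)+1))) := by
          rw [one_mul]
          convert hRb using 2
          · rw [abs_of_nonneg hx0]
          · push_cast; ring
  have habs2 : |(Real.exp (-x) - 1) * (x ^ K / (Nat.factorial K : ℝ))|
      ≤ x ^ (K+1) * (1 / (Nat.factorial K : ℝ)) := by
    rw [abs_mul]
    have hfac : (0:ℝ) < (Nat.factorial K : ℝ) := by positivity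
    have h2 : |x ^ K / (Nat.factorial K : ℝ)| = x ^ K / (Nat.factorial K : ℝ) := by
      rw [abs_of_nonneg (by positivity)]
    rw [h2]
    calc |Real.exp (-x) - 1| * (x ^ K / (Nat.factorial K : ℝ))
        ≤ x * (x ^ K / (Nat.factorial K : ℝ)) := by gcongr
      _ = x ^ (K+1) * (1 / (Nat.factorial K : ℝ)) := by rw [pow_succ]; ring
  calc |Real.exp (-x) * (Real.exp x - ∑ i ∈ Finset.range (K+1), x ^ i / (Nat.factorial i : ℝ))
        + (Real.exp (-x) - 1) * (x ^ K / (Nat.factorial K : ℝ))|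
      ≤ |Real.exp (-x) * (Real.exp x - ∑ i ∈ Finset.range (K+1), x ^ i / (Nat.factorial i : ℝ))|
        + |(Real.exp (-x) - 1) * (x ^ K / (Nat.factorial K : ℝ))| := abs_add_le _ _
    _ ≤ x ^ (K+1) * (((K:ℝ)+2) / ((Nat.factorial (K+1) : ℝ) * ((K:ℝ)+1)))
        + x ^ (K+1) * (1 / (Nat.factorial K : ℝ)) := add_le_add habs1 habs2
    _ = (((K:ℝ) + 2) / ((Nat.factorial (K+1) : ℝ) * ((K:ℝ)+1)) + 1 / (Nat.factorial K : ℝ))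
          * x ^ (K+1) := by ring

/-- Small-`z` asymptotic of the location-averaged channel-gain CDF:
`F̃(z)/z^K → (2/(R² K! η^K)) ∫_0^R (1+r^α)^K r dr` as `z → 0⁺`. -/
theorem stmt_17 (K : ℕ) (hK : 1 ≤ K) (η α R : ℝ) (hη : 0 < η) (hα : 0 < α) (hR : 0 < R) :
    Filter.Tendsto
      (fun z : ℝ =>
        ((2 / R ^ 2) * ∫ r in (0:ℝ)..R,
          (1 - Real.exp (-(z * (1 + r ^ α) / η)) *
            ∑ i ∈ Finset.range K, (z * (1 + r ^ α) / η) ^ i / (Nat.factorial i : ℝ)) * r)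
          / z ^ K)
      (nhdsWithin 0 (Set.Ioi 0))
      (nhds ((2 / (R ^ 2 * (Nat.factorial K : ℝ) * η ^ K)) *
        ∫ r in (0:ℝ)..R, (1 + r ^ α) ^ K * r)) := by
  have hfac : (0:ℝ) < (Nat.factorial K : ℝ) := by positivity
  have hcont_rpow : Continuous fun r : ℝ => r ^ α := by
    rw [continuous_iff_continuousAt]
    intro x
    exact Real.continuousAt_rpow_const x α (Or.inr hα.le)
  set C : ℝ := ((K:ℝ) + 2) / ((Nat.factorial (K+1) : ℝ) * ((K:ℝ)+1)) + 1 / (Nat.factorial K : ℝ)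
    with hC_def
  have hC0 : 0 < C := by
    have h1 : (0:ℝ) < (Nat.factorial (K+1) : ℝ) := by positivity
    positivity
  set a : ℝ → ℝ := fun r => (1 + r ^ α) / η with ha_def
  have ha_pos : ∀ r : ℝ, 0 ≤ r → 0 < a r := by
    intro r hr
    have : (0:ℝ) ≤ r ^ α := Real.rpow_nonneg hr α
    exact div_pos (by linarith) hη
  have ha_mono : ∀ r : ℝ, 0 ≤ r → r ≤ R → a r ≤ a R := by
    intro r h0 hrR
    have h1 : r ^ α ≤ R ^ α := Real.rpow_le_rpow h0 hrR hα.le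
    simp only [ha_def]
    gcongr
  have haR : 0 < a R := ha_pos R hR.le
  set z₀ : ℝ := min (1 / a R) 1 with hz₀_def
  have hz₀ : 0 < z₀ := lt_min (by positivity) one_pos
  set F : ℝ → ℝ → ℝ := fun z r =>
    (1 - Real.exp (-(z * (1 + r ^ α) / η)) *
      ∑ i ∈ Finset.range K, (z * (1 + r ^ α) / η) ^ i / (Nat.factorial i : ℝ)) * r / z ^ K
    with hF_def
  set f : ℝ → ℝ := fun r => (1 + r ^ α) ^ K / (η ^ K * (Nat.factorial K : ℝ)) * r with hf_def
  set D : ℝ := C * (a R) ^ (K+1) * R with hD_def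
  have hD0 : 0 < D := by positivity
  -- key estimate
  have hkey : ∀ r : ℝ, 0 ≤ r → r ≤ R → ∀ z : ℝ, z ∈ Set.Ioc (0:ℝ) z₀ →
      |F z r - f r| ≤ D * z := by
    intro r hr0 hrR z hz
    obtain ⟨hz0, hzz₀⟩ := hz
    have hzne : z ≠ 0 := ne_of_gt hz0
    have har : 0 < a r := ha_pos r hr0
    have harR : a r ≤ a R := ha_mono r hr0 hrR
    set x : ℝ := z * (1 + r ^ α) / η with hx_def
    have hxa : x = z * a r := by rw [hx_def, ha_def, mul_div_assoc]
    have hx0 : 0 ≤ x := by rw [hxa]; positivity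
    have hx1 : x ≤ 1 := by
      rw [hxa]
      calc z * a r ≤ z₀ * a R := by gcongr
        _ ≤ (1 / a R) * a R := by gcongr; exact min_le_left _ _
        _ = 1 := by field_simp
    have hxK : x ^ K = z ^ K * a r ^ K := by rw [hxa, mul_pow]
    have hfr : f r = x ^ K / (Nat.factorial K : ℝ) * r / z ^ K := by
      rw [hf_def, hxK, ha_def, div_pow]
      field_simp
    have heq : F z r - f r =
        ((1 - Real.exp (-x) * ∑ i ∈ Finset.range K, x ^ i / (Nat.factorial i : ℝ))
          - x ^ K / (Nat.factorial K : ℝ)) * r / z ^ K := by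
      rw [hfr, hF_def]
      ring
    have hzK : (0:ℝ) < z ^ K := by positivity
    have h1 : |F z r - f r| ≤ C * x ^ (K+1) * r / z ^ K := by
      rw [heq, abs_div, abs_mul, abs_of_nonneg hr0, abs_of_pos hzK]
      gcongr
      exact phi_est K hx0 hx1
    have h2 : C * x ^ (K+1) * r / z ^ K = C * a r ^ (K+1) * r * z := by
      have : x ^ (K+1) = z ^ (K+1) * a r ^ (K+1) := by rw [hxa, mul_pow]
      rw [this, pow_succ]
      field_simp
    rw [h2] at h1
    have h3 : a r ^ (K+1) ≤ a R ^ (K+1) := pow_le_pow_left₀ har.le harR _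
    calc |F z r - f r| ≤ C * a r ^ (K+1) * r * z := h1
      _ ≤ C * a R ^ (K+1) * R * z := by
          apply mul_le_mul_of_nonneg_right _ hz0.le
          exact mul_le_mul (mul_le_mul_of_nonneg_left h3 hC0.le) hrR hr0 (by positivity)
      _ = D * z := by rw [hD_def]
  -- pointwise limit
  have hlim : ∀ r ∈ Set.uIoc (0:ℝ) R, Tendsto (fun z => F z r) (nhdsWithin 0 (Set.Ioi 0)) (nhds (f r)) := by
    intro r hr
    rw [Set.uIoc_of_le hR.le] at hr
    have hr0 : 0 ≤ r := hr.1.le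
    have hrR : r ≤ R := hr.2
    have hev : ∀ᶠ z in nhdsWithin 0 (Set.Ioi 0), |F z r - f r| ≤ D * z := by
      filter_upwards [Ioc_mem_nhdsGT_of_mem (Set.mem_Ico.mpr ⟨le_refl _, hz₀⟩)] with z hz
      exact hkey r hr0 hrR z hz
    have hDz : Tendsto (fun z : ℝ => D * z) (nhdsWithin 0 (Set.Ioi 0)) (nhds 0) := by
      have h6 : Tendsto (fun z : ℝ => D * z) (nhds 0) (nhds (D * 0)) :=
        (continuous_const.mul continuous_id).tendsto 0
      rw [mul_zero] at h6
      exact h6.mono_left nhdsWithin_le_nhds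
    have habs : Tendsto (fun z => |F z r - f r|) (nhdsWithin 0 (Set.Ioi 0)) (nhds 0) :=
      squeeze_zero' (Filter.Eventually.of_forall fun z => abs_nonneg _) hev hDz
    have hsub : Tendsto (fun z => F z r - f r) (nhdsWithin 0 (Set.Ioi 0)) (nhds 0) := by
      rw [tendsto_zero_iff_abs_tendsto_zero]
      exact habs
    have := hsub.add_const (f r)
    simpa using this
  -- measurability
  have hmeas : ∀ z : ℝ, Continuous (F z) := by
    intro z
    have h1 : Continuous fun r : ℝ => z * (1 + r ^ α) / η :=
      (continuous_const.mul (continuous_const.add hcont_rpow)).div_const η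
    have hsum : Continuous fun r : ℝ =>
        ∑ i ∈ Finset.range K, (z * (1 + r ^ α) / η) ^ i / (Nat.factorial i : ℝ) :=
      continuous_finset_sum _ fun i _ => (h1.pow i).div_const _
    have hexp : Continuous fun r : ℝ => Real.exp (-(z * (1 + r ^ α) / η)) :=
      Real.continuous_exp.comp h1.neg
    exact ((continuous_const.sub (hexp.mul hsum)).mul continuous_id).div_const _
  -- bound
  set M : ℝ := (1 + R ^ α) ^ K / (η ^ K * (Nat.factorial K : ℝ)) * R + D * z₀ with hM_def
  have hbound : ∀ᶠ z in nhdsWithin 0 (Set.Ioi 0), ∀ r ∈ Set.uIoc (0:ℝ) R, ‖F z r‖ ≤ M := by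
    filter_upwards [Ioc_mem_nhdsGT_of_mem (Set.mem_Ico.mpr ⟨le_refl _, hz₀⟩)] with z hz
    intro r hr
    rw [Set.uIoc_of_le hR.le] at hr
    have hr0 : 0 ≤ r := hr.1.le
    have hrR : r ≤ R := hr.2
    have h1 := hkey r hr0 hrR z hz
    have hfrM : f r ≤ (1 + R ^ α) ^ K / (η ^ K * (Nat.factorial K : ℝ)) * R := by
      simp only [hf_def]
      have hrα : r ^ α ≤ R ^ α := Real.rpow_le_rpow hr0 hrR hα.le
      have h0r : (0:ℝ) ≤ r ^ α := Real.rpow_nonneg hr0 α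
      gcongr
    have hfr0 : 0 ≤ f r := by
      simp only [hf_def]
      have h0r : (0:ℝ) ≤ r ^ α := Real.rpow_nonneg hr0 α
      positivity
    have hDzz : D * z ≤ D * z₀ := by gcongr; exact hz.2
    calc ‖F z r‖ = |F z r| := rfl
      _ ≤ |f r| + |F z r - f r| := by
          have := abs_add_le (f r) (F z r - f r); simpa using this
      _ ≤ (1 + R ^ α) ^ K / (η ^ K * (Nat.factorial K : ℝ)) * R + D * z₀ := by
          rw [abs_of_nonneg hfr0]
          exact add_le_add (hfrM) (le_trans h1 hDzz)
      _ = M := rfl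
  -- dominated convergence
  have H : Tendsto (fun z => ∫ r in (0:ℝ)..R, F z r) (nhdsWithin 0 (Set.Ioi 0))
      (nhds (∫ r in (0:ℝ)..R, f r)) := by
    apply intervalIntegral.tendsto_integral_filter_of_dominated_convergence (bound := fun _ => M)
    · exact Filter.Eventually.of_forall fun z => (hmeas z).aestronglyMeasurable
    · filter_upwards [hbound] with z hz
      exact Filter.Eventually.of_forall hz
    · exact intervalIntegrable_const
    · exact Filter.Eventually.of_forall fun r hr => hlim r hr
  have H2 := H.const_mul (2 / R ^ 2)
  have hval : (2 / R ^ 2) * (∫ r in (0:ℝ)..R, f r)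
      = (2 / (R ^ 2 * (Nat.factorial K : ℝ) * η ^ K)) *
        ∫ r in (0:ℝ)..R, (1 + r ^ α) ^ K * r := by
    have h5 : (∫ r in (0:ℝ)..R, f r) =
        (1 / (η ^ K * (Nat.factorial K : ℝ))) * ∫ r in (0:ℝ)..R, (1 + r ^ α) ^ K * r := by
      rw [← intervalIntegral.integral_const_mul]
      apply intervalIntegral.integral_congr
      intro r _
      simp only [hf_def]
      ring
    rw [h5, ← mul_assoc]
    congr 1
    field_simp
  rw [hval] at H2
  apply Filter.Tendsto.congr' _ H2
  filter_upwards [self_mem_nhdsWithin] with z (hz : z ∈ Set.Ioi (0:ℝ))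
  have : (∫ r in (0:ℝ)..R, F z r) = (∫ r in (0:ℝ)..R,
      (1 - Real.exp (-(z * (1 + r ^ α) / η)) *
        ∑ i ∈ Finset.range K, (z * (1 + r ^ α) / η) ^ i / (Nat.factorial i : ℝ)) * r) / z ^ K := by
    rw [intervalIntegral.integral_div]
  rw [this, mul_div_assoc]
end
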